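/- Let $R$ be a commutative ring, $E$ a finitely generated projective $R$-module, and $A = R \oplus E$ the square-zero extension algebra with $(a,v)(b,w) = (ab, aw+bv)$. If $M$ is a finitely generated projective $A$-module and $\phi\colon M/EM \to M$ is an $R$-linear section of the quotient map $M \to M/EM$, then the $A$-linear map $A \otimes_R (M/EM) \to M$ extending $\phi$ is an isomorphism. -/
import Mathlib


/-!
STATEMENT 1: Let `R` be a commutative ring, `E` a finitely generated projective
`R`-module, and `A = R ⊕ E` the square-zero extension algebra with
`(a,v)(b,w) = (ab, aw+bv)` (i.e. `A = TrivSqZeroExt R E`).  If `M` is a finitely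
generated projective `A`-module and `φ : M/EM → M` is an `R`-linear section of the
quotient map `M → M/EM`, then the `A`-linear map `A ⊗_R (M/EM) → M` extending `φ`
is an isomorphism.  Here `EM` is the submodule generated by the products `e • m`.
-/

set_option maxHeartbeats 1000000

open TrivSqZeroExt
open scoped TensorProduct

theorem stmt1 (R E : Type) [CommRing R] [AddCommGroup E] [Module R E]
    [Module Rᵐᵒᵖ E] [IsCentralScalar R E]
    [Module.Finite R E] [Module.Projective R E]
    (M : Type) [AddCommGroup M] [Module (TrivSqZeroExt R E) M]
    [Module R M] [IsScalarTower R (TrivSqZeroExt R E) M]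
    [Module.Finite (TrivSqZeroExt R E) M] [Module.Projective (TrivSqZeroExt R E) M]
    -- `EM ⊆ M` is the submodule generated by the products `e • m`
    (EM : Submodule (TrivSqZeroExt R E) M)
    (hEM : EM = Ideal.span (Set.range (TrivSqZeroExt.inr : E → TrivSqZeroExt R E)) •
      (⊤ : Submodule (TrivSqZeroExt R E) M))
    -- an `R`-linear section of the quotient map `M → M/EM`
    (φ : (M ⧸ EM) →ₗ[R] M) (hφ : ∀ x : M ⧸ EM, EM.mkQ (φ x) = x) :
    -- the `A`-linear extension `A ⊗_R (M/EM) → M` of `φ` is an isomorphism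
    Function.Bijective (φ.liftBaseChange (TrivSqZeroExt R E)) := by
  set I : Ideal (TrivSqZeroExt R E) :=
    Ideal.span (Set.range (TrivSqZeroExt.inr : E → TrivSqZeroExt R E)) with hIdef
  set f := φ.liftBaseChange (TrivSqZeroExt R E) with hfdef
  -- `fst` vanishes on `I`
  have hIfst : ∀ a ∈ I, fst a = 0 := by
    intro a ha
    have h : I ≤ RingHom.ker (fstHom R R E) := by
      rw [hIdef, Ideal.span_le]
      rintro _ ⟨e, rfl⟩
      simp [RingHom.mem_ker]
    simpa [RingHom.mem_ker] using h ha
  -- `I * I = ⊥`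
  have hII : I * I = ⊥ := by
    rw [eq_bot_iff]
    refine Submodule.mul_le.2 fun a ha b hb => ?_
    have hab : a * b = 0 := by
      ext
      · simp [fst_mul, hIfst a ha]
      · simp [snd_mul, hIfst a ha, hIfst b hb]
    simp [hab]
  -- surjectivity
  have hsurj : LinearMap.range f = ⊤ := by
    have hmem : ∀ m : M, m ∈ LinearMap.range f ⊔ EM := by
      intro m
      have h1 : φ (EM.mkQ m) ∈ LinearMap.range f :=
        ⟨1 ⊗ₜ EM.mkQ m, by simp [hfdef, LinearMap.liftBaseChange_tmul]⟩
      have h2 : m - φ (EM.mkQ m) ∈ EM := by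
        have h0 : EM.mkQ (m - φ (EM.mkQ m)) = 0 := by rw [map_sub, hφ, sub_self]
        rwa [Submodule.mkQ_apply, Submodule.Quotient.mk_eq_zero] at h0
      have := Submodule.add_mem_sup h1 h2
      simpa using this
    have htop : (⊤ : Submodule (TrivSqZeroExt R E) M) ≤ LinearMap.range f ⊔ I • ⊤ := by
      rw [← hEM]; intro m _; exact hmem m
    refine top_le_iff.mp ?_
    calc (⊤ : Submodule (TrivSqZeroExt R E) M)
        ≤ LinearMap.range f ⊔ I • (LinearMap.range f ⊔ I • ⊤) :=
          htop.trans (sup_le_sup_left (smul_mono_right I htop) _)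
      _ = LinearMap.range f ⊔ (I • LinearMap.range f ⊔ (I * I) • ⊤) := by
          rw [Submodule.smul_sup, ← Ideal.smul_eq_mul, Submodule.smul_assoc]
      _ ≤ LinearMap.range f := by
          simp [hII, sup_le_iff, Submodule.smul_le_right]
  -- `inr e` kills the quotient
  have hinr_smul : ∀ (e : E) (x : M ⧸ EM), (inr e : TrivSqZeroExt R E) • x = 0 := by
    intro e x
    obtain ⟨m, rfl⟩ := EM.mkQ_surjective x
    rw [← map_smul, Submodule.mkQ_apply, Submodule.Quotient.mk_eq_zero, hEM]
    exact Submodule.smul_mem_smul (Ideal.subset_span ⟨e, rfl⟩) trivial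
  -- key: every `t` is congruent to `1 ⊗ mkQ (f t)` mod `I • ⊤`
  have key : ∀ t : TrivSqZeroExt R E ⊗[R] (M ⧸ EM),
      t - (1 : TrivSqZeroExt R E) ⊗ₜ[R] (EM.mkQ (f t)) ∈
        I • (⊤ : Submodule (TrivSqZeroExt R E) (TrivSqZeroExt R E ⊗[R] (M ⧸ EM))) := by
    intro t
    induction t using TensorProduct.induction_on with
    | zero => simpa using Submodule.zero_mem _
    | tmul a q =>
      have h2 : EM.mkQ (f (a ⊗ₜ[R] q)) = a • q := by
        rw [hfdef, LinearMap.liftBaseChange_tmul, map_smul, hφ]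
      have h3 : a • q = (fst a : R) • q := by
        conv_lhs => rw [← inl_fst_add_inr_snd_eq a]
        rw [add_smul, hinr_smul, add_zero, ← algebraMap_eq_inl, algebraMap_smul]
      have h4 : (1 : TrivSqZeroExt R E) ⊗ₜ[R] ((fst a : R) • q)
          = (inl (fst a) : TrivSqZeroExt R E) ⊗ₜ[R] q := by
        rw [TensorProduct.tmul_smul, TensorProduct.smul_tmul', ← algebraMap_eq_inl]
        congr 1
        simp [Algebra.smul_def]
      rw [h2, h3, h4, ← TensorProduct.sub_tmul]
      have h5 : a - inl (fst a) = (inr (snd a) : TrivSqZeroExt R E) := by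
        ext <;> simp
      rw [h5]
      have h6 : (inr (snd a) : TrivSqZeroExt R E) ⊗ₜ[R] q
          = (inr (snd a) : TrivSqZeroExt R E) • ((1 : TrivSqZeroExt R E) ⊗ₜ[R] q) := by
        rw [TensorProduct.smul_tmul', smul_eq_mul, mul_one]
      rw [h6]
      exact Submodule.smul_mem_smul (Ideal.subset_span ⟨snd a, rfl⟩) trivial
    | add x y hx hy =>
      have : (x + y) - (1 : TrivSqZeroExt R E) ⊗ₜ[R] (EM.mkQ (f (x + y)))
          = (x - 1 ⊗ₜ[R] (EM.mkQ (f x))) + (y - 1 ⊗ₜ[R] (EM.mkQ (f y))) := by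
        rw [map_add, map_add, TensorProduct.tmul_add]
        abel
      rw [this]
      exact Submodule.add_mem _ hx hy
  -- kernel is contained in `I • ⊤`
  have hker_le : LinearMap.ker f ≤
      I • (⊤ : Submodule (TrivSqZeroExt R E) (TrivSqZeroExt R E ⊗[R] (M ⧸ EM))) := by
    intro t ht
    have h := key t
    rw [LinearMap.mem_ker.mp ht] at h
    simpa using h
  -- split `f` using projectivity of `M`
  obtain ⟨g, hg⟩ := Module.projective_lifting_property f LinearMap.id
    (LinearMap.range_eq_top.mp hsurj)
  set p : TrivSqZeroExt R E ⊗[R] (M ⧸ EM) →ₗ[TrivSqZeroExt R E]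
      TrivSqZeroExt R E ⊗[R] (M ⧸ EM) := LinearMap.id - g ∘ₗ f with hpdef
  have hp_ker : ∀ t ∈ LinearMap.ker f, p t = t := by
    intro t ht
    simp [hpdef, LinearMap.mem_ker.mp ht]
  have hp_range : ∀ t, p t ∈ LinearMap.ker f := by
    intro t
    have : f (g (f t)) = f t := congrFun (congrArg DFunLike.coe hg) (f t)
    simp [hpdef, LinearMap.mem_ker, this]
  have hker_smul : LinearMap.ker f ≤ I • LinearMap.ker f := by
    intro t ht
    have h1 := Submodule.mem_map_of_mem (f := p) (hker_le ht)
    rw [Submodule.map_smul''] at h1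
    rw [hp_ker t ht] at h1
    have h3 : I • Submodule.map p ⊤ ≤ I • LinearMap.ker f :=
      smul_mono_right I (by rintro _ ⟨u, -, rfl⟩; exact hp_range u)
    exact h3 h1
  have hker : LinearMap.ker f = ⊥ := by
    have h2 : LinearMap.ker f ≤ (I * I) • LinearMap.ker f :=
      hker_smul.trans ((smul_mono_right I hker_smul).trans_eq
        (by rw [← Ideal.smul_eq_mul, Submodule.smul_assoc]))
    rw [hII, Submodule.bot_smul] at h2
    exact le_bot_iff.mp h2
  exact ⟨LinearMap.ker_eq_bot.mp hker, LinearMap.range_eq_top.mp hsurj⟩
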